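/- arXiv:2212.06355 — 2 statements merged into one kernel-verified Lean document; each statement's English description precedes it below -/
import Mathlib

section
/- In the finite discounted MDP setting with positivity, the marginal density ratio μ* satisfies, for every function f : 𝒮×𝒜 → ℝ, the estimating equation 0 = E_{(s,a,r,s′)∼p_b}[γ μ*(s,a) f(s′, π^e) − μ*(s,a) f(s,a)] + (1−γ) E_{s∼p_e^{(1)}}[f(s, π^e)], where f(s, π^e) = Σ_{a∈𝒜} π^e(a|s) f(s,a) and μ*(s,a) = p^{(∞)}_{e,γ}(s)π^e(a|s)/(p_b(s)π^b(a|s)). -/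
open Finset

set_option maxHeartbeats 2000000

/-- Finite discounted MDP with positivity. The marginal density ratio `μ*`
satisfies, for every test function `f : 𝒮 × 𝒜 → ℝ`, the estimating equation
`0 = E_{p_b}[γ μ*(s,a) f(s',π^e) − μ*(s,a) f(s,a)] + (1−γ) E_{s∼p_e^{(1)}}[f(s,π^e)]`. -/
theorem mdp_marginal_ratio_estimating_equation
    {S A R : Type} [Fintype S] [Fintype A] [Fintype R]
    (rval : R → ℝ) (γ : ℝ) (hγ0 : 0 ≤ γ) (hγ1 : γ < 1)
    (p : S → A → S × R → ℝ)
    (hp0 : ∀ s a sr, 0 ≤ p s a sr) (hpsum : ∀ s a, ∑ sr : S × R, p s a sr = 1)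
    (pie : S → A → ℝ) (hpie0 : ∀ s a, 0 ≤ pie s a) (hpie1 : ∀ s, ∑ a, pie s a = 1)
    (p1e : S → ℝ) (hp1e0 : ∀ s, 0 ≤ p1e s) (hp1e1 : ∑ s, p1e s = 1)
    (pb : S → ℝ) (hpb0 : ∀ s, 0 ≤ pb s) (hpb1 : ∑ s, pb s = 1)
    (pib : S → A → ℝ) (hpib0 : ∀ s a, 0 ≤ pib s a) (hpib1 : ∀ s, ∑ a, pib s a = 1)
    (pe : ℕ → S → ℝ)
    (hpe0 : ∀ s, pe 0 s = p1e s)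
    (hpeS : ∀ n s', pe (n + 1) s' = ∑ s, ∑ a, pe n s * pie s a * ∑ r : R, p s a (s', r))
    (pinf : S → ℝ) (hpinf : ∀ s, pinf s = (1 - γ) * ∑' n : ℕ, γ ^ n * pe n s)
    (μ : S → A → ℝ) (hμ : ∀ s a, μ s a = pinf s * pie s a / (pb s * pib s a))
    (hpos : ∀ s a, 0 < pinf s * pie s a → 0 < pb s * pib s a) :
    ∀ f : S → A → ℝ,
      0 = (∑ s, ∑ a, ∑ sr : S × R, pb s * pib s a * p s a sr *
            (γ * μ s a * (∑ a', pie sr.1 a' * f sr.1 a') - μ s a * f s a))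
          + (1 - γ) * ∑ s, p1e s * ∑ a, pie s a * f s a := by
  -- nonnegativity of pe
  have hpe_nonneg : ∀ n s, 0 ≤ pe n s := by
    intro n
    induction n with
    | zero => intro s; rw [hpe0]; exact hp1e0 s
    | succ n ih =>
        intro s'
        rw [hpeS]
        apply Finset.sum_nonneg; intro s _
        apply Finset.sum_nonneg; intro a _
        have h3 : (0:ℝ) ≤ ∑ r : R, p s a (s', r) :=
          Finset.sum_nonneg fun r _ => hp0 s a (s', r)
        exact mul_nonneg (mul_nonneg (ih s) (hpie0 s a)) h3
  -- total mass 1 for pe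
  have hpe_sum : ∀ n, ∑ s, pe n s = 1 := by
    intro n
    induction n with
    | zero => simp only [hpe0]; exact hp1e1
    | succ n ih =>
        have : ∑ s', pe (n+1) s'
            = ∑ s, ∑ a, pe n s * pie s a * ∑ sr : S × R, p s a sr := by
          simp only [hpeS]
          rw [Finset.sum_comm]
          congr 1; ext s
          rw [Finset.sum_comm]
          congr 1; ext a
          rw [← Finset.mul_sum, Fintype.sum_prod_type]
        rw [this]
        simp only [hpsum, mul_one]
        calc ∑ s, ∑ a, pe n s * pie s a = ∑ s, pe n s * ∑ a, pie s a := by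
              simp [Finset.mul_sum]
          _ = 1 := by simp [hpie1, ih]
  have hpe_le : ∀ n s, pe n s ≤ 1 := by
    intro n s
    have := hpe_sum n
    calc pe n s ≤ ∑ s, pe n s :=
          Finset.single_le_sum (fun x _ => hpe_nonneg n x) (Finset.mem_univ s)
      _ = 1 := this
  have hsumm : ∀ s, Summable (fun n : ℕ => γ ^ n * pe n s) := by
    intro s
    apply Summable.of_nonneg_of_le
      (fun n => by have := hpe_nonneg n s; positivity)
      (fun n => by
        have h1 := hpe_le n s
        have h2 : (0:ℝ) ≤ γ ^ n := pow_nonneg hγ0 n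
        nlinarith)
      (summable_geometric_of_lt_one hγ0 hγ1)
  have hsumm1 : ∀ s, Summable (fun n : ℕ => γ ^ n * pe (n+1) s) := by
    intro s
    apply Summable.of_nonneg_of_le
      (fun n => by have := hpe_nonneg (n+1) s; positivity)
      (fun n => by
        have h1 := hpe_le (n+1) s
        have h2 : (0:ℝ) ≤ γ ^ n := pow_nonneg hγ0 n
        nlinarith)
      (summable_geometric_of_lt_one hγ0 hγ1)
  -- key cancellation: μ * (pb * pib) = pinf * pie
  have hμkey : ∀ s a, μ s a * (pb s * pib s a) = pinf s * pie s a := by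
    intro s a
    by_cases h : 0 < pinf s * pie s a
    · have hd := hpos s a h
      rw [hμ, div_mul_cancel₀ _ (ne_of_gt hd)]
    · have hnn : 0 ≤ pinf s * pie s a := by
        have h1 : 0 ≤ pinf s := by
          rw [hpinf]
          have : 0 ≤ ∑' n : ℕ, γ ^ n * pe n s :=
            tsum_nonneg fun n => by have := hpe_nonneg n s; positivity
          nlinarith
        exact mul_nonneg h1 (hpie0 s a)
      have h0 : pinf s * pie s a = 0 := le_antisymm (not_lt.mp h) hnn
      rw [hμ, h0]
      simp
  -- the flow identity
  have hflow : ∀ s', γ * ∑ s, ∑ a, pinf s * pie s a * (∑ r : R, p s a (s', r))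
      = pinf s' - (1 - γ) * p1e s' := by
    intro s'
    have hstep : ∑ s, ∑ a, pinf s * pie s a * (∑ r : R, p s a (s', r))
        = (1 - γ) * ∑' n : ℕ, γ ^ n * pe (n+1) s' := by
      calc ∑ s, ∑ a, pinf s * pie s a * (∑ r : R, p s a (s', r))
          = ∑ s, ∑ a, ∑' n : ℕ, (1 - γ) * (γ ^ n * (pe n s * pie s a * ∑ r : R, p s a (s', r))) := by
            refine Finset.sum_congr rfl fun s _ => Finset.sum_congr rfl fun a _ => ?_
            rw [hpinf, mul_assoc, mul_assoc, ← tsum_mul_right, ← tsum_mul_left]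
            congr 1; ext n; ring
        _ = ∑ s, ∑' n : ℕ, ∑ a, (1 - γ) * (γ ^ n * (pe n s * pie s a * ∑ r : R, p s a (s', r))) := by
            refine Finset.sum_congr rfl fun s _ => ?_
            refine (Summable.tsum_finsetSum fun a _ => ?_).symm
            exact (((hsumm s).mul_right (pie s a * ∑ r : R, p s a (s', r))).mul_left
              (1 - γ)).congr fun n => by ring
        _ = ∑' n : ℕ, ∑ s, ∑ a, (1 - γ) * (γ ^ n * (pe n s * pie s a * ∑ r : R, p s a (s', r))) := by
            refine (Summable.tsum_finsetSum fun s _ => ?_).symm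
            refine summable_sum fun a _ => ?_
            exact (((hsumm s).mul_right (pie s a * ∑ r : R, p s a (s', r))).mul_left
              (1 - γ)).congr fun n => by ring
        _ = ∑' n : ℕ, (1 - γ) * (γ ^ n * pe (n+1) s') := by
            refine tsum_congr fun n => ?_
            rw [hpeS, Finset.mul_sum, Finset.mul_sum]
            refine Finset.sum_congr rfl fun s _ => ?_
            rw [Finset.mul_sum, Finset.mul_sum]
            try exact Finset.sum_congr rfl fun a _ => by ring
        _ = (1 - γ) * ∑' n : ℕ, γ ^ n * pe (n+1) s' := by rw [← tsum_mul_left]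
    rw [hstep, hpinf]
    have hshift : ∑' n : ℕ, γ ^ n * pe n s'
        = pe 0 s' + ∑' n : ℕ, γ ^ (n+1) * pe (n+1) s' := by
      rw [Summable.tsum_eq_zero_add (hsumm s')]
      simp
    have hγfac : ∑' n : ℕ, γ ^ (n+1) * pe (n+1) s'
        = γ * ∑' n : ℕ, γ ^ n * pe (n+1) s' := by
      rw [← tsum_mul_left]
      congr 1; ext n; ring
    rw [hshift, hγfac, hpe0]
    ring
  intro f
  set g : S → ℝ := fun s => ∑ a, pie s a * f s a with hg
  have hmain : (∑ s, ∑ a, ∑ sr : S × R, pb s * pib s a * p s a sr *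
        (γ * μ s a * g sr.1 - μ s a * f s a))
      = γ * ∑ s, ∑ a, pinf s * pie s a * (∑ s' : S, (∑ r : R, p s a (s', r)) * g s')
        - ∑ s, ∑ a, pinf s * pie s a * f s a := by
    rw [Finset.mul_sum, ← Finset.sum_sub_distrib]
    refine Finset.sum_congr rfl fun s _ => ?_
    rw [Finset.mul_sum, ← Finset.sum_sub_distrib]
    refine Finset.sum_congr rfl fun a _ => ?_
    have hkey := hμkey s a
    calc ∑ sr : S × R, pb s * pib s a * p s a sr * (γ * μ s a * g sr.1 - μ s a * f s a)
        = ∑ sr : S × R, (pinf s * pie s a * p s a sr * (γ * g sr.1) -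
            pinf s * pie s a * p s a sr * f s a) := by
          refine Finset.sum_congr rfl fun sr _ => ?_
          have h2 : pb s * pib s a * μ s a = pinf s * pie s a := by
            rw [mul_comm (pb s * pib s a)]; exact hkey
          linear_combination (p s a sr * (γ * g sr.1 - f s a)) * h2
      _ = γ * (pinf s * pie s a * ∑ sr : S × R, p s a sr * g sr.1)
            - pinf s * pie s a * (∑ sr : S × R, p s a sr) * f s a := by
          rw [Finset.sum_sub_distrib]
          congr 1
          · rw [Finset.mul_sum, Finset.mul_sum]
            exact Finset.sum_congr rfl fun sr _ => by ring
          · rw [Finset.mul_sum, Finset.sum_mul]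
            try exact Finset.sum_congr rfl fun sr _ => by ring
      _ = γ * (pinf s * pie s a * ∑ s' : S, (∑ r : R, p s a (s', r)) * g s')
            - pinf s * pie s a * f s a := by
          rw [hpsum, mul_one]
          have hA : ∑ sr : S × R, p s a sr * g sr.1
              = ∑ s' : S, (∑ r : R, p s a (s', r)) * g s' := by
            rw [Fintype.sum_prod_type]
            exact Finset.sum_congr rfl fun s' _ => by simp [Finset.sum_mul]
          rw [hA]
  have hswap : ∑ s, ∑ a, pinf s * pie s a * (∑ s' : S, (∑ r : R, p s a (s', r)) * g s')
      = ∑ s' : S, (∑ s, ∑ a, pinf s * pie s a * (∑ r : R, p s a (s', r))) * g s' := by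
    calc ∑ s, ∑ a, pinf s * pie s a * (∑ s' : S, (∑ r : R, p s a (s', r)) * g s')
        = ∑ s, ∑ s' : S, ∑ a, pinf s * pie s a * ((∑ r : R, p s a (s', r)) * g s') := by
          refine Finset.sum_congr rfl fun s _ => ?_
          rw [Finset.sum_comm]
          refine Finset.sum_congr rfl fun a _ => ?_
          rw [Finset.mul_sum]
      _ = ∑ s' : S, ∑ s, ∑ a, pinf s * pie s a * ((∑ r : R, p s a (s', r)) * g s') := by
          rw [Finset.sum_comm]
      _ = ∑ s' : S, (∑ s, ∑ a, pinf s * pie s a * (∑ r : R, p s a (s', r))) * g s' := by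
          refine Finset.sum_congr rfl fun s' _ => ?_
          rw [Finset.sum_mul]
          refine Finset.sum_congr rfl fun s _ => ?_
          rw [Finset.sum_mul]
          exact Finset.sum_congr rfl fun a _ => by ring
  have hfinal : γ * ∑ s' : S, (∑ s, ∑ a, pinf s * pie s a * (∑ r : R, p s a (s', r))) * g s'
      = ∑ s' : S, pinf s' * g s' - (1 - γ) * ∑ s' : S, p1e s' * g s' := by
    rw [Finset.mul_sum]
    rw [Finset.mul_sum, ← Finset.sum_sub_distrib]
    refine Finset.sum_congr rfl fun s' _ => ?_
    have h := hflow s'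
    linear_combination g s' * h
  have hlast : ∑ s' : S, pinf s' * g s' = ∑ s, ∑ a, pinf s * pie s a * f s a := by
    refine Finset.sum_congr rfl fun s _ => ?_
    rw [hg, Finset.mul_sum]
    exact Finset.sum_congr rfl fun a _ => by ring
  rw [hmain, hswap, hfinal, hlast]
  ring
end

section
/- In the finite discounted MDP setting with positivity, the double reinforcement learning estimating function is doubly robust at the population level: for any functions q̂, μ̂ : 𝒮×𝒜 → ℝ, define D = E_{s∼p_e^{(1)}}[q̂(s, π^e)] + (1−γ)^{−1} E_{(s,a,r,s′)∼p_b}[μ̂(s,a)(r + γ q̂(s′, π^e) − q̂(s,a))], where q̂(s, π^e) = Σ_{a∈𝒜} π^e(a|s) q̂(s,a). If μ̂ = μ* or q̂ = q (the true Q-function under π^e), then D = J(γ). -/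
/-!
Let `ρ` be the discounted occupancy of `π^e` and `v = q̂(·, π^e)`. The flow equation
`ρ = (1 - γ) p_e^{(1)} + γ ρ P^π` turns the `ρ ⊗ π^e`-expectation of the Bellman residual of any
`q̂` into `(1 - γ) (J - E_{p_e^{(1)}}[v])`. Subtracting this from the correction term of `D` gives
`D - J = (1 - γ)⁻¹ ∑ (p_b π^b μ̂ - ρ π^e) · residual`, a product of the weight error and the
Bellman residual, which vanishes when `μ̂ = μ*` (positivity makes the importance weights exact)
or when `q̂ = q`.
-/

open Finset Matrix

lemma mul_div_cancel_of_nonneg_of_pos_imp {α : Type*} [Field α] [LinearOrder α] {x y : α}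
    (hx : 0 ≤ x) (h : 0 < x → 0 < y) : y * (x / y) = x :=
  mul_div_cancel_of_imp' fun hy => le_antisymm (not_lt.1 fun hlt => (h hlt).ne' hy) hx

section DiscountedOccupancy

variable {ι : Type*} [Fintype ι] {K : Matrix ι ι ℝ} {d : ℕ → ι → ℝ} {γ : ℝ}

noncomputable def discountedOccupancy (γ : ℝ) (d : ℕ → ι → ℝ) : ι → ℝ :=
  fun i => (1 - γ) * ∑' k, γ ^ k * d k i

lemma nonneg_of_succ_eq_vecMul [DecidableEq ι] (hK : K ∈ rowStochastic ℝ ι)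
    (hd : ∀ k, d (k + 1) = d k ᵥ* K) (h0 : ∀ i, 0 ≤ d 0 i) (k : ℕ) (i : ι) :
    0 ≤ d k i := by
  induction k generalizing i with
  | zero => exact h0 i
  | succ k ih => rw [hd]; exact nonneg_vecMul_of_mem_rowStochastic hK ih i

lemma dotProduct_one_of_succ_eq_vecMul [DecidableEq ι] (hK : K ∈ rowStochastic ℝ ι)
    (hd : ∀ k, d (k + 1) = d k ᵥ* K) (k : ℕ) : d k ⬝ᵥ 1 = d 0 ⬝ᵥ 1 := by
  induction k with
  | zero => rfl
  | succ k ih => rw [hd, ← dotProduct_mulVec, hK.2, ih]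

lemma summable_geometric_mul_of_succ_eq_vecMul [DecidableEq ι] (hK : K ∈ rowStochastic ℝ ι)
    (hd : ∀ k, d (k + 1) = d k ᵥ* K) (h0 : ∀ i, 0 ≤ d 0 i) (hγ0 : 0 ≤ γ) (hγ1 : γ < 1)
    (i : ι) : Summable fun k => γ ^ k * d k i := by
  have hnonneg := nonneg_of_succ_eq_vecMul hK hd h0
  refine ((summable_geometric_of_lt_one hγ0 hγ1).mul_right (d 0 ⬝ᵥ 1)).of_nonneg_of_le
    (fun k => mul_nonneg (pow_nonneg hγ0 k) (hnonneg k i)) fun k => ?_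
  gcongr
  rw [← dotProduct_one_of_succ_eq_vecMul hK hd k, dotProduct_one]
  exact single_le_sum (fun j _ => hnonneg k j) (mem_univ i)

omit [Fintype ι] in
lemma discountedOccupancy_nonneg (hγ0 : 0 ≤ γ) (hγ1 : γ ≤ 1) (hd : ∀ k i, 0 ≤ d k i)
    (i : ι) : 0 ≤ discountedOccupancy γ d i :=
  mul_nonneg (sub_nonneg.2 hγ1) (tsum_nonneg fun k => mul_nonneg (pow_nonneg hγ0 k) (hd k i))

lemma discountedOccupancy_dotProduct (hs : ∀ i, Summable fun k => γ ^ k * d k i)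
    (f : ι → ℝ) :
    discountedOccupancy γ d ⬝ᵥ f = (1 - γ) * ∑' k, γ ^ k * (d k ⬝ᵥ f) := by
  simp only [discountedOccupancy, dotProduct, mul_assoc, ← tsum_mul_right, ← mul_sum]
  rw [← Summable.tsum_finsetSum fun i _ => by
    simpa only [mul_assoc] using (hs i).mul_right (f i)]
  simp only [mul_sum]

/-- The Bellman flow equation `ρ = (1 - γ) d₀ + γ ρ K`, tested against `f`. -/
lemma discountedOccupancy_dotProduct_eq_add (hd : ∀ k, d (k + 1) = d k ᵥ* K)
    (hs : ∀ i, Summable fun k => γ ^ k * d k i) (f : ι → ℝ) :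
    discountedOccupancy γ d ⬝ᵥ f
      = (1 - γ) * (d 0 ⬝ᵥ f) + γ * (discountedOccupancy γ d ⬝ᵥ (K *ᵥ f)) := by
  have hsf : ∀ g : ι → ℝ, Summable fun k => γ ^ k * (d k ⬝ᵥ g) := fun g => by
    simp only [dotProduct, mul_sum, ← mul_assoc]
    exact summable_sum fun i _ => (hs i).mul_right (g i)
  have hshift : ∑' k, γ ^ (k + 1) * (d (k + 1) ⬝ᵥ f)
      = γ * ∑' k, γ ^ k * (d k ⬝ᵥ (K *ᵥ f)) := by
    rw [← tsum_mul_left]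
    congr with k
    rw [hd, ← dotProduct_mulVec, pow_succ]
    ring
  rw [discountedOccupancy_dotProduct hs, discountedOccupancy_dotProduct hs,
    (hsf f).tsum_eq_zero_add, hshift]
  ring

end DiscountedOccupancy

section FiniteMDP

variable {S A R : Type*} [Fintype S] [Fintype A] [Fintype R]
  (p : S → A → S × R → ℝ) (pie : S → A → ℝ) (rval : R → ℝ) (γ : ℝ)

def stateTransition : Matrix S S ℝ :=
  Matrix.of fun s s' => ∑ a, pie s a * ∑ r, p s a (s', r)

/-- `policyAverage pie q s` is the paper's `q(s, π)`. -/
def policyAverage (q : S → A → ℝ) (s : S) : ℝ :=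
  ∑ a, pie s a * q s a

def expectedReward (s : S) (a : A) : ℝ :=
  ∑ sr, p s a sr * rval sr.2

def bellmanResidual (q : S → A → ℝ) (s : S) (a : A) : ℝ :=
  ∑ sr, p s a sr * (rval sr.2 + γ * policyAverage pie q sr.1) - q s a

variable {p pie}

lemma stateTransition_mem_rowStochastic [DecidableEq S] (hp0 : ∀ s a sr, 0 ≤ p s a sr)
    (hpsum : ∀ s a, ∑ sr, p s a sr = 1) (hpie0 : ∀ s a, 0 ≤ pie s a)
    (hpie1 : ∀ s, ∑ a, pie s a = 1) : stateTransition p pie ∈ rowStochastic ℝ S := by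
  refine mem_rowStochastic_iff_sum.2 ⟨fun s s' => ?_, fun s => ?_⟩
  · exact sum_nonneg fun a _ => mul_nonneg (hpie0 s a) (sum_nonneg fun r _ => hp0 s a _)
  · simp only [stateTransition, of_apply]
    rw [sum_comm]
    simp only [← mul_sum, ← Fintype.sum_prod_type', hpsum, mul_one, hpie1]

lemma vecMul_stateTransition (x : S → ℝ) (s' : S) :
    (x ᵥ* stateTransition p pie) s' = ∑ s, ∑ a, x s * pie s a * ∑ r, p s a (s', r) := by
  simp only [vecMul, dotProduct, stateTransition, of_apply, mul_sum, mul_assoc]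

lemma stateTransition_mulVec (f : S → ℝ) (s : S) :
    (stateTransition p pie *ᵥ f) s = ∑ a, pie s a * ∑ sr, p s a sr * f sr.1 := by
  simp only [mulVec, dotProduct, stateTransition, of_apply, sum_mul, Fintype.sum_prod_type]
  rw [sum_comm]
  simp only [mul_sum, sum_mul, mul_assoc]

lemma dotProduct_policyAverage (x : S → ℝ) (g : S → A → ℝ) :
    x ⬝ᵥ policyAverage pie g = ∑ s, ∑ a, x s * pie s a * g s a := by
  simp only [dotProduct, policyAverage, mul_sum, mul_assoc]

lemma policyAverage_bellmanResidual (q : S → A → ℝ) :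
    policyAverage pie (bellmanResidual p pie rval γ q)
      = policyAverage pie (expectedReward p rval)
        + γ • (stateTransition p pie *ᵥ policyAverage pie q) - policyAverage pie q := by
  funext s
  simp only [policyAverage, bellmanResidual, expectedReward, Pi.add_apply, Pi.sub_apply,
    Pi.smul_apply, smul_eq_mul, stateTransition_mulVec, mul_sub, mul_add, sum_sub_distrib,
    sum_add_distrib, mul_sum]
  congr 2
  simp only [mul_left_comm]

lemma sum_mul_bellmanResidual (hpsum : ∀ s a, ∑ sr, p s a sr = 1) (w m : ℝ)
    (q : S → A → ℝ) (s : S) (a : A) :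
    ∑ sr, w * p s a sr * (m * (rval sr.2 + γ * policyAverage pie q sr.1 - q s a))
      = w * m * bellmanResidual p pie rval γ q s a := by
  have hsplit (sr : S × R) :
      w * p s a sr * (m * (rval sr.2 + γ * policyAverage pie q sr.1 - q s a))
        = w * m * (p s a sr * (rval sr.2 + γ * policyAverage pie q sr.1))
          - w * m * q s a * p s a sr := by
    ring
  simp only [hsplit, sum_sub_distrib, ← mul_sum, hpsum, bellmanResidual]
  ring

lemma discountedOccupancy_dotProduct_bellmanResidual {d : ℕ → S → ℝ}
    (hd : ∀ k, d (k + 1) = d k ᵥ* stateTransition p pie)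
    (hs : ∀ s, Summable fun k => γ ^ k * d k s) (q : S → A → ℝ) :
    discountedOccupancy γ d ⬝ᵥ policyAverage pie (bellmanResidual p pie rval γ q)
      = (1 - γ) * ((∑' k, γ ^ k * (d k ⬝ᵥ policyAverage pie (expectedReward p rval)))
          - d 0 ⬝ᵥ policyAverage pie q) := by
  rw [policyAverage_bellmanResidual, dotProduct_sub, dotProduct_add, dotProduct_smul,
    discountedOccupancy_dotProduct_eq_add hd hs (policyAverage pie q),
    discountedOccupancy_dotProduct hs (policyAverage pie (expectedReward p rval)), smul_eq_mul]
  ring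

end FiniteMDP

theorem mdp_drl_doubly_robust_general
    {S A R : Type} [Fintype S] [Fintype A] [Fintype R]
    (rval : R → ℝ) (γ : ℝ) (hγ0 : 0 ≤ γ) (hγ1 : γ < 1)
    (p : S → A → S × R → ℝ)
    (hp0 : ∀ s a sr, 0 ≤ p s a sr) (hpsum : ∀ s a, ∑ sr : S × R, p s a sr = 1)
    (pie : S → A → ℝ) (hpie0 : ∀ s a, 0 ≤ pie s a) (hpie1 : ∀ s, ∑ a, pie s a = 1)
    (p1e : S → ℝ) (hp1e0 : ∀ s, 0 ≤ p1e s)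
    (pb : S → ℝ)
    (pib : S → A → ℝ)
    (pe : ℕ → S → ℝ)
    (hpe0 : ∀ s, pe 0 s = p1e s)
    (hpeS : ∀ n s', pe (n + 1) s' = ∑ s, ∑ a, pe n s * pie s a * ∑ r : R, p s a (s', r))
    (pinf : S → ℝ) (hpinf : ∀ s, pinf s = (1 - γ) * ∑' n : ℕ, γ ^ n * pe n s)
    (J : ℝ)
    (hJ : J = ∑' n : ℕ, γ ^ n *
        ∑ s, ∑ a, ∑ sr : S × R, pe n s * pie s a * p s a sr * rval sr.2)
    (μ : S → A → ℝ) (hμ : ∀ s a, μ s a = pinf s * pie s a / (pb s * pib s a))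
    (hpos : ∀ s a, 0 < pinf s * pie s a → 0 < pb s * pib s a)
    (qhat μhat : S → A → ℝ)
    (D : ℝ)
    (hD : D = (∑ s, p1e s * ∑ a, pie s a * qhat s a)
        + (1 - γ)⁻¹ *
            ∑ s, ∑ a, ∑ sr : S × R, pb s * pib s a * p s a sr *
              (μhat s a *
                (rval sr.2 + γ * (∑ a', pie sr.1 a' * qhat sr.1 a') - qhat s a))) :
    ((∀ s a, μhat s a = μ s a) → D = J)
      ∧ ((∀ s a, qhat s a =
            ∑ sr : S × R, p s a sr *
              (rval sr.2 + γ * ∑ a', pie sr.1 a' * qhat sr.1 a')) → D = J) := by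
  classical
  have hK := stateTransition_mem_rowStochastic hp0 hpsum hpie0 hpie1
  have hpe : ∀ k, pe (k + 1) = pe k ᵥ* stateTransition p pie := fun k =>
    funext fun s' => by rw [hpeS, vecMul_stateTransition]
  have hpe0_nonneg : ∀ s, 0 ≤ pe 0 s := fun s => hpe0 s ▸ hp1e0 s
  have hs := summable_geometric_mul_of_succ_eq_vecMul hK hpe hpe0_nonneg hγ0 hγ1
  have hρ : pinf = discountedOccupancy γ pe := funext hpinf
  have hJ' : J = ∑' k, γ ^ k * (pe k ⬝ᵥ policyAverage pie (expectedReward p rval)) := by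
    simp only [hJ, dotProduct_policyAverage, expectedReward, mul_sum, mul_assoc]
  have hresidual : ∑ s, ∑ a, pinf s * pie s a * bellmanResidual p pie rval γ qhat s a
      = (1 - γ) * (J - p1e ⬝ᵥ policyAverage pie qhat) := by
    rw [← dotProduct_policyAverage, hρ,
      discountedOccupancy_dotProduct_bellmanResidual rval γ hpe hs, hJ', funext hpe0]
  have hD' : D = p1e ⬝ᵥ policyAverage pie qhat + (1 - γ)⁻¹ *
      ∑ s, ∑ a, pb s * pib s a * μhat s a * bellmanResidual p pie rval γ qhat s a := by
    rw [hD]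
    congr 2
    exact sum_congr rfl fun s _ => sum_congr rfl fun a _ =>
      sum_mul_bellmanResidual rval γ hpsum _ _ qhat s a
  have hDJ : D = J + (1 - γ)⁻¹ * ∑ s, ∑ a, (pb s * pib s a * μhat s a - pinf s * pie s a)
      * bellmanResidual p pie rval γ qhat s a := by
    have hγ : 1 - γ ≠ 0 := sub_ne_zero.2 hγ1.ne'
    simp only [sub_mul, sum_sub_distrib, hresidual, hD']
    field_simp
    ring
  refine ⟨fun hμhat => ?_, fun hq => ?_⟩
  · have hpinf_nonneg : ∀ s, 0 ≤ pinf s := hρ ▸ discountedOccupancy_nonneg hγ0 hγ1.le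
      (nonneg_of_succ_eq_vecMul hK hpe hpe0_nonneg)
    simp only [hDJ, hμhat, hμ, fun s a => mul_div_cancel_of_nonneg_of_pos_imp
      (mul_nonneg (hpinf_nonneg s) (hpie0 s a)) (hpos s a), sub_self, zero_mul, sum_const_zero,
      mul_zero, add_zero]
  · have hzero (s : S) (a : A) : bellmanResidual p pie rval γ qhat s a = 0 :=
      sub_eq_zero.2 (hq s a).symm
    simp only [hDJ, hzero, mul_zero, sum_const_zero, add_zero]

/-- Finite discounted MDP with positivity. The double reinforcement
learning estimating function is doubly robust at the population level: with
`D = E_{s∼p_e^{(1)}}[q̂(s,π^e)] + (1−γ)⁻¹ E_{p_b}[μ̂(s,a)(r + γ q̂(s',π^e) − q̂(s,a))]`,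
if `μ̂ = μ*` or `q̂` is the true Q-function (the unique solution of the Bellman equation),
then `D = J(γ)`. -/
theorem mdp_drl_doubly_robust
    {S A R : Type} [Fintype S] [Fintype A] [Fintype R]
    (rval : R → ℝ) (γ : ℝ) (hγ0 : 0 ≤ γ) (hγ1 : γ < 1)
    (p : S → A → S × R → ℝ)
    (hp0 : ∀ s a sr, 0 ≤ p s a sr) (hpsum : ∀ s a, ∑ sr : S × R, p s a sr = 1)
    (pie : S → A → ℝ) (hpie0 : ∀ s a, 0 ≤ pie s a) (hpie1 : ∀ s, ∑ a, pie s a = 1)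
    (p1e : S → ℝ) (hp1e0 : ∀ s, 0 ≤ p1e s) (hp1e1 : ∑ s, p1e s = 1)
    (pb : S → ℝ) (hpb0 : ∀ s, 0 ≤ pb s) (hpb1 : ∑ s, pb s = 1)
    (pib : S → A → ℝ) (hpib0 : ∀ s a, 0 ≤ pib s a) (hpib1 : ∀ s, ∑ a, pib s a = 1)
    (pe : ℕ → S → ℝ)
    (hpe0 : ∀ s, pe 0 s = p1e s)
    (hpeS : ∀ n s', pe (n + 1) s' = ∑ s, ∑ a, pe n s * pie s a * ∑ r : R, p s a (s', r))
    (pinf : S → ℝ) (hpinf : ∀ s, pinf s = (1 - γ) * ∑' n : ℕ, γ ^ n * pe n s)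
    (J : ℝ)
    (hJ : J = ∑' n : ℕ, γ ^ n *
        ∑ s, ∑ a, ∑ sr : S × R, pe n s * pie s a * p s a sr * rval sr.2)
    (μ : S → A → ℝ) (hμ : ∀ s a, μ s a = pinf s * pie s a / (pb s * pib s a))
    (hpos : ∀ s a, 0 < pinf s * pie s a → 0 < pb s * pib s a)
    (qhat μhat : S → A → ℝ)
    (D : ℝ)
    (hD : D = (∑ s, p1e s * ∑ a, pie s a * qhat s a)
        + (1 - γ)⁻¹ *
            ∑ s, ∑ a, ∑ sr : S × R, pb s * pib s a * p s a sr *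
              (μhat s a *
                (rval sr.2 + γ * (∑ a', pie sr.1 a' * qhat sr.1 a') - qhat s a))) :
    ((∀ s a, μhat s a = μ s a) → D = J)
      ∧ ((∀ s a, qhat s a =
            ∑ sr : S × R, p s a sr *
              (rval sr.2 + γ * ∑ a', pie sr.1 a' * qhat sr.1 a')) → D = J) :=
  mdp_drl_doubly_robust_general rval γ hγ0 hγ1 p hp0 hpsum pie hpie0 hpie1 p1e hp1e0 pb pib pe hpe0
    hpeS pinf hpinf J hJ μ hμ hpos qhat μhat D hD
end
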